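/- Let ν be a normal weight on B, and let h : B → (0,∞) be a bounded function with liminf_{|z|→1} h(z) > 0. Let α ∈ B∖{0} and let γ = γ_α be the Möbius automorphism of B, with p-th component γ_p. Let j ≥ 1 be an integer and p ∈ {1,…,N} be such that M_p^{j*} := sup_{w∈B} h(w)·‖δ_{w_p}^{H_ν^{(j)}}‖ < ∞ (w_p being the p-th coordinate of w). Then there exists a constant C_{p,j} > 0 such that sup_{z∈B} h(z)·‖δ_{γ_p(z)}^{H_ν^{(j)}}‖ ≤ C_{p,j} · M_p^{j*}. -/

import Mathlib

open scoped BigOperators ComplexConjugate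
open MeasureTheory Filter Set

noncomputable section

/-- `ℂ^N` with the Euclidean norm. -/
abbrev EN (N : ℕ) := EuclideanSpace ℂ (Fin N)

/-- The open unit ball `B ⊂ ℂ^N`. -/
def unitBall (N : ℕ) : Set (EN N) := Metric.ball 0 1

/-- The inner product of the paper: `⟨z,w⟩ = Σ z_k conj(w_k)`. -/
def ipd {N : ℕ} (z w : EN N) : ℂ := ∑ k, z k * conj (w k)

/-- The radial derivative `Rf(z) = ⟨z, ∇f(z)⟩`, realized as `(Df)(z) z`. -/
def radD {N : ℕ} (f : EN N → ℂ) : EN N → ℂ := fun z => fderiv ℂ f z z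

/-- Iterated radial derivative `R^{(n)}`. -/
def radDn {N : ℕ} (n : ℕ) (f : EN N → ℂ) : EN N → ℂ := radD^[n] f

/-- `H(B)`, the holomorphic functions on the unit ball. -/
def HolB (N : ℕ) : Set (EN N → ℂ) := {f | DifferentiableOn ℂ f (unitBall N)}

/-- `S(B)`, the holomorphic self-maps of the unit ball. -/
def SelfMapB (N : ℕ) : Set (EN N → EN N) :=
  {φ | DifferentiableOn ℂ φ (unitBall N) ∧ Set.MapsTo φ (unitBall N) (unitBall N)}

/-- A normal weight, viewed as a function of the radius `t ∈ [0,1)`. -/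
structure IsNormalWeight (ω : ℝ → ℝ) : Prop where
  cont : ContinuousOn ω (Set.Ico 0 1)
  pos : ∀ t ∈ Set.Ico (0:ℝ) 1, 0 < ω t
  exists_params : ∃ δ a b : ℝ, 0 ≤ δ ∧ δ < 1 ∧ 0 < a ∧ a < b ∧
    AntitoneOn (fun t => ω t / (1 - t) ^ a) (Set.Ico δ 1) ∧
    Filter.Tendsto (fun t => ω t / (1 - t) ^ a) (nhdsWithin 1 (Set.Iio 1)) (nhds 0) ∧
    MonotoneOn (fun t => ω t / (1 - t) ^ b) (Set.Ico δ 1) ∧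
    Filter.Tendsto (fun t => ω t / (1 - t) ^ b) (nhdsWithin 1 (Set.Iio 1)) Filter.atTop

/-- The set `{ω(|z|)·|R^{(n)}f(z)| : z ∈ B}`. -/
def growthSet {N : ℕ} (ω : ℝ → ℝ) (n : ℕ) (f : EN N → ℂ) : Set ℝ :=
  (fun z => ω ‖z‖ * ‖radDn n f z‖) '' unitBall N

/-- membership in the weighted-type `n`-order growth space `H_ω^{(n)}`. -/
def MemHw {N : ℕ} (ω : ℝ → ℝ) (n : ℕ) (f : EN N → ℂ) : Prop :=
  f ∈ HolB N ∧ BddAbove (growthSet ω n f)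

/-- The norm of `H_ω^{(n)}`: `‖f‖ = |f(0)| + sup_{z∈B} ω(z)|R^{(n)}f(z)|`. -/
def growthNorm {N : ℕ} (ω : ℝ → ℝ) (n : ℕ) (f : EN N → ℂ) : ℝ :=
  ‖f 0‖ + sSup (growthSet ω n f)

/-- The operator norm of the point-evaluation functional `δ_z` on `H_ω^{(n)}`. -/
def evalNorm {N : ℕ} (ω : ℝ → ℝ) (n : ℕ) (z : EN N) : ℝ :=
  sSup {r | ∃ f : EN N → ℂ, MemHw ω n f ∧ growthNorm ω n f ≤ 1 ∧ r = ‖f z‖}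

/-- The iterated integral `I_ω^k(r)`; `I_ω^0(r) := 1/ω(r)` and
`I_ω^{k+1}(r) = ∫_0^r I_ω^k(t) dt`. -/
def Iw (ω : ℝ → ℝ) : ℕ → ℝ → ℝ
  | 0 => fun r => 1 / ω r
  | (k+1) => fun r => ∫ t in (0:ℝ)..r, Iw ω k t

/-- The condition `I_ω^k(1) < ∞` (vacuously true for `k = 0`). -/
def IwFinite (ω : ℝ → ℝ) : ℕ → Prop
  | 0 => True
  | (k+1) => BddAbove (Iw ω (k+1) '' Set.Ico (0:ℝ) 1)

/-- The Möbius automorphism `γ_α` of the unit ball. -/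
def mobius {N : ℕ} (α : EN N) : EN N → EN N := fun z =>
  (1 - ipd z α)⁻¹ •
    ((α - (ipd z α / (‖α‖ : ℂ)^2) • α) -
      ((Real.sqrt (1 - ‖α‖^2) : ℂ)) • (z - (ipd z α / (‖α‖ : ℂ)^2) • α))

/-- `S̃_p(B)`. -/
def tildeS {N : ℕ} (p : Fin N) : Set (EN N → EN N) :=
  {φ | φ ∈ SelfMapB N ∧ (∃ z ∈ unitBall N, φ z = 0) ∧
    ∀ z ∈ unitBall N, ∃ z' ∈ unitBall N, ‖φ z' p‖ = ‖φ z‖}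

/-- `S_p^*(B)`. -/
def starS {N : ℕ} (p : Fin N) : Set (EN N → EN N) :=
  {φ | φ ∈ SelfMapB N ∧
    ∀ lam : ℂ, ‖lam‖ < 1 → ∃ z ∈ unitBall N, φ z = lam • EuclideanSpace.single p 1}

/-- `𝔅_{i,j}(g)(z) = Σ_{k⃗∈K_{i,j}} C^i_{k⃗} ∏_{t=1}^j R^{(k_t)}g(z)`. -/
def frakB {N : ℕ} (i j : ℕ) (g : EN N → ℂ) (z : EN N) : ℂ :=
  ∑ k : Fin j → Fin (i+1),
    if (∀ t, 1 ≤ (k t : ℕ)) ∧ (∑ t, (k t : ℕ)) = i then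
      ((i.factorial : ℂ) / (∏ t, (((k t : ℕ).factorial : ℕ) : ℂ))) * ∏ t, radDn (k t : ℕ) g z
    else 0

/-- `ℬ^n_j(ψ;g)`. -/
def scrB {N : ℕ} (n j : ℕ) (ψ g : EN N → ℂ) (z : EN N) : ℂ :=
  if j = 0 then radDn n ψ z
  else ∑ i ∈ Finset.Icc j n, (n.choose i : ℂ) * radDn (n - i) ψ z * frakB i j g z

/-- `liminf_{|z|→1} μ(z)|R^{(n)}f(z)| > 0`. -/
def limInfPos {N : ℕ} (μ : ℝ → ℝ) (n : ℕ) (f : EN N → ℂ) : Prop :=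
  ∃ c > (0:ℝ), ∃ r < (1:ℝ), ∀ z ∈ unitBall N, r < ‖z‖ → c ≤ μ ‖z‖ * ‖radDn n f z‖

/-- `lim_{|z|→1} μ(z)|R^{(n)}f(z)| = 0`. -/
def limZero {N : ℕ} (μ : ℝ → ℝ) (n : ℕ) (f : EN N → ℂ) : Prop :=
  ∀ ε > (0:ℝ), ∃ r < (1:ℝ), ∀ z ∈ unitBall N, r < ‖z‖ → μ ‖z‖ * ‖radDn n f z‖ < ε

/-- The `(n,μ)`-condition on the pair `(ψ, g)` (with `g = φ_p`). -/
def CondNMu {N : ℕ} (μ : ℝ → ℝ) (n : ℕ) (ψ g : EN N → ℂ) : Prop :=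
  (MemHw μ n ψ ∧ limInfPos μ n ψ) ∧
  ∀ j : ℕ, 1 ≤ j → j ≤ n →
    MemHw μ n (fun z => ψ z * (g z) ^ j) ∧ limZero μ n (fun z => ψ z * (g z) ^ j)

/-- The weighted composition operator `W_{ψ,φ} f = ψ·(f∘φ)`. -/
def Wop {N : ℕ} (ψ : EN N → ℂ) (φ : EN N → EN N) (f : EN N → ℂ) : EN N → ℂ :=
  fun z => ψ z * f (φ z)

/-- Boundedness of `W_{ψ,φ} : H_ν^{(k)} → H_μ^{(n)}`. -/
def WBounded {N : ℕ} (ν μ : ℝ → ℝ) (k n : ℕ) (ψ : EN N → ℂ) (φ : EN N → EN N) : Prop :=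
  ∃ C > (0:ℝ), ∀ f : EN N → ℂ, MemHw ν k f →
    MemHw μ n (Wop ψ φ f) ∧ growthNorm μ n (Wop ψ φ f) ≤ C * growthNorm ν k f

/-- The operator norm of `W_{ψ,φ} : H_ν^{(k)} → H_μ^{(n)}`. -/
def WNorm {N : ℕ} (ν μ : ℝ → ℝ) (k n : ℕ) (ψ : EN N → ℂ) (φ : EN N → EN N) : ℝ :=
  sInf {C : ℝ | 0 ≤ C ∧ ∀ f : EN N → ℂ, MemHw ν k f →
    growthNorm μ n (Wop ψ φ f) ≤ C * growthNorm ν k f}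

/-- Compactness of `W_{ψ,φ} : H_ν^{(k)} → H_μ^{(n)}`: every bounded sequence in
`H_ν^{(k)}` has a subsequence whose image converges in the norm of `H_μ^{(n)}`. -/
def WCompact {N : ℕ} (ν μ : ℝ → ℝ) (k n : ℕ) (ψ : EN N → ℂ) (φ : EN N → EN N) : Prop :=
  WBounded ν μ k n ψ φ ∧
  ∀ f : ℕ → (EN N → ℂ), (∀ s, MemHw ν k (f s)) →
    (∃ M : ℝ, ∀ s, growthNorm ν k (f s) ≤ M) →
    ∃ σ : ℕ → ℕ, StrictMono σ ∧ ∃ g : EN N → ℂ, MemHw μ n g ∧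
      Filter.Tendsto (fun s => growthNorm μ n (fun z => Wop ψ φ (f (σ s)) z - g z))
        Filter.atTop (nhds 0)

/-- First-order partial derivative `∂f/∂z_l`. -/
def pderiv1 {N : ℕ} (l : Fin N) (f : EN N → ℂ) : EN N → ℂ :=
  fun z => fderiv ℂ f z (EuclideanSpace.single l 1)

/-- Iterated partial derivative `∂^j f/(∂z_{l₁}⋯∂z_{l_j})`. -/
def pderivs {N : ℕ} : (j : ℕ) → (Fin j → Fin N) → (EN N → ℂ) → (EN N → ℂ)
  | 0, _, f => f
  | (j+1), l, f => pderivs j (fun t => l t.succ) (pderiv1 (l 0) f)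

end

/-!
Since `h` is bounded and `γ_α` maps `B` into itself, it suffices to bound `‖δ_{a e_p}‖` by a
multiple of `M_p^{j*}` uniformly in `a ∈ 𝔻`. Let `h ≥ c > 0` on `r < |w| < 1`. If `|a| > r`, the
point `w = a e_p` itself gives `c ‖δ_{a e_p}‖ ≤ M_p^{j*}`. If `|a| ≤ r` and `N ≥ 2`, the same works
for a point `w = a e_p + t e_q` near the sphere. If `N = 1`, point evaluations are bounded on
compact subdiscs (a bound on `R^{(j)} f` descends step by step to `f`, as `R^{(k)} f(0) = 0` for
`k ≥ 1`), while the constant `1` shows `‖δ_w‖ ≥ 1`, so `M_p^{j*} ≥ c`.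
-/

open scoped InnerProductSpace
open Metric

noncomputable section

lemma mem_unitBall_iff {N : ℕ} {z : EN N} : z ∈ unitBall N ↔ ‖z‖ < 1 := by
  simp [unitBall]

lemma norm_smul_single_one {N : ℕ} (p : Fin N) (a : ℂ) :
    ‖a • EuclideanSpace.single p (1 : ℂ)‖ = ‖a‖ := by
  simp [norm_smul]

section evalNorm

variable {N : ℕ} {ν : ℝ → ℝ} {n : ℕ}

lemma evalNorm_nonneg (z : EN N) : 0 ≤ evalNorm ν n z :=
  Real.sSup_nonneg fun _ ⟨_, _, _, hr⟩ => hr ▸ norm_nonneg _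

lemma evalNorm_le {z : EN N} {K : ℝ} (hK : 0 ≤ K)
    (hb : ∀ f, MemHw ν n f → growthNorm ν n f ≤ 1 → ‖f z‖ ≤ K) : evalNorm ν n z ≤ K :=
  Real.sSup_le (fun _ ⟨f, hf, hfn, hr⟩ => hr ▸ hb f hf hfn) hK

lemma radD_const (a : ℂ) : radD (fun _ : EN N => a) = 0 := by
  funext z
  simp [radD]

lemma radDn_const (hn : 1 ≤ n) (a : ℂ) : radDn n (fun _ : EN N => a) = 0 := by
  obtain ⟨k, rfl⟩ := Nat.exists_eq_add_of_le' hn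
  rw [radDn, Function.iterate_succ_apply, radD_const]
  exact Function.iterate_fixed (radD_const 0) k

lemma memHw_const_and_growthNorm_eq (hn : 1 ≤ n) (a : ℂ) :
    MemHw ν n (fun _ : EN N => a) ∧ growthNorm ν n (fun _ : EN N => a) = ‖a‖ := by
  have hset : growthSet ν n (fun _ : EN N => a) = {0} := by
    simp only [growthSet, radDn_const hn, Pi.zero_apply, norm_zero, mul_zero]
    exact Set.Nonempty.image_const ⟨0, by simp [unitBall]⟩ 0
  exact ⟨⟨differentiableOn_const a, hset ▸ bddAbove_singleton⟩,
    by rw [growthNorm, hset, csSup_singleton, add_zero]⟩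

lemma one_le_evalNorm (hn : 1 ≤ n) {z : EN N} {K : ℝ}
    (hb : ∀ f, MemHw ν n f → growthNorm ν n f ≤ 1 → ‖f z‖ ≤ K) : 1 ≤ evalNorm ν n z := by
  obtain ⟨hmem, hnorm⟩ := memHw_const_and_growthNorm_eq (N := N) (ν := ν) hn 1
  exact le_csSup ⟨K, fun _ ⟨f, hf, hfn, hr⟩ => hr ▸ hb f hf hfn⟩
    ⟨fun _ => 1, hmem, by simp [hnorm], by simp⟩

lemma le_growthNorm {f : EN N → ℂ} (hf : MemHw ν n f) {z : EN N} (hz : z ∈ unitBall N) :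
    ν ‖z‖ * ‖radDn n f z‖ ≤ growthNorm ν n f :=
  (le_csSup hf.2 ⟨z, hz, rfl⟩).trans (le_add_of_nonneg_left (norm_nonneg _))

lemma norm_apply_zero_le_growthNorm (hν : ∀ t ∈ Ico (0 : ℝ) 1, 0 ≤ ν t) {f : EN N → ℂ}
    (hf : MemHw ν n f) : ‖f 0‖ ≤ growthNorm ν n f := by
  have h0 : (0 : EN N) ∈ unitBall N := by simp [unitBall]
  have hsup : 0 ≤ sSup (growthSet ν n f) :=
    (mul_nonneg (hν _ (by simp)) (norm_nonneg _)).trans (le_csSup hf.2 ⟨0, h0, rfl⟩)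
  exact le_add_of_nonneg_right hsup

end evalNorm

def diskRadD (v : ℂ → ℂ) : ℂ → ℂ := fun μ => μ * deriv v μ

lemma DifferentiableOn.diskRadD {v : ℂ → ℂ} {s : Set ℂ} (hv : DifferentiableOn ℂ v s)
    (hs : IsOpen s) : DifferentiableOn ℂ (diskRadD v) s :=
  differentiableOn_id.mul (hv.deriv hs)

lemma DifferentiableOn.iterate_diskRadD {v : ℂ → ℂ} {s : Set ℂ} (hv : DifferentiableOn ℂ v s)
    (hs : IsOpen s) (k : ℕ) : DifferentiableOn ℂ (_root_.diskRadD^[k] v) s := by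
  induction k with
  | zero => exact hv
  | succ k ih => rw [Function.iterate_succ_apply']; exact ih.diskRadD hs

lemma diskRadD_zero (v : ℂ → ℂ) : diskRadD v 0 = 0 := zero_mul _

/-- By the maximum principle `|v'| ≤ B / r` on the disc of radius `r`, and the mean value
inequality over a segment of length `≤ r` gives the claim. -/
lemma norm_sub_le_of_norm_diskRadD_le {v : ℂ → ℂ} {R r B : ℝ}
    (hv : DifferentiableOn ℂ v (ball 0 R)) (hr : 0 < r) (hrR : r < R)
    (hB : ∀ μ ∈ closedBall (0 : ℂ) r, ‖diskRadD v μ‖ ≤ B) {μ : ℂ} (hμ : μ ∈ closedBall 0 r) :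
    ‖v μ - v 0‖ ≤ B := by
  have hsub : closedBall (0 : ℂ) r ⊆ ball 0 R := closedBall_subset_ball hrR
  have hv' : DifferentiableOn ℂ (deriv v) (ball 0 R) := hv.deriv isOpen_ball
  have hderiv : ∀ w ∈ closedBall (0 : ℂ) r, ‖deriv v w‖ ≤ B / r := by
    intro w hw
    refine Complex.norm_le_of_forall_mem_frontier_norm_le isBounded_ball
      ⟨hv'.mono (ball_subset_ball hrR.le), ?_⟩ (fun ζ hζ => ?_) (by rwa [closure_ball 0 hr.ne'])
    · rw [closure_ball 0 hr.ne']
      exact hv'.continuousOn.mono hsub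
    · rw [frontier_ball 0 hr.ne', mem_sphere_zero_iff_norm] at hζ
      have hζB := hB ζ (mem_closedBall_zero_iff.2 hζ.le)
      rw [diskRadD, norm_mul, hζ] at hζB
      rwa [le_div_iff₀ hr, mul_comm]
  calc ‖v μ - v 0‖ ≤ B / r * ‖μ - 0‖ :=
        (convex_closedBall 0 r).norm_image_sub_le_of_norm_deriv_le
          (fun w hw => hv.differentiableAt (isOpen_ball.mem_nhds (hsub hw))) hderiv
          (mem_closedBall_self hr.le) hμ
    _ ≤ B / r * r := by
        gcongr
        · exact (norm_nonneg _).trans (hderiv 0 (mem_closedBall_self hr.le))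
        · simpa using hμ
    _ = B := div_mul_cancel₀ B hr.ne'

lemma norm_le_of_norm_iterate_diskRadD_le {R r B : ℝ} (hr : 0 < r) (hrR : r < R) (k : ℕ)
    {v : ℂ → ℂ} (hv : DifferentiableOn ℂ v (ball 0 R))
    (hB : ∀ μ ∈ closedBall (0 : ℂ) r, ‖diskRadD^[k] v μ‖ ≤ B) {μ : ℂ}
    (hμ : μ ∈ closedBall 0 r) : ‖v μ‖ ≤ ‖v 0‖ + B := by
  induction k generalizing v μ with
  | zero => exact (hB μ hμ).trans (le_add_of_nonneg_left (norm_nonneg _))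
  | succ k ih =>
    have hderiv : ∀ μ ∈ closedBall (0 : ℂ) r, ‖diskRadD v μ‖ ≤ B := fun μ hμ => by
      simpa [diskRadD_zero] using ih (hv.diskRadD isOpen_ball) hB hμ
    calc ‖v μ‖ ≤ ‖v 0‖ + ‖v μ - v 0‖ := norm_le_norm_add_norm_sub' _ _
      _ ≤ ‖v 0‖ + B := by gcongr; exact norm_sub_le_of_norm_diskRadD_le hv hr hrR hderiv hμ

lemma differentiableOn_slice {N : ℕ} (p : Fin N) {f : EN N → ℂ}
    (hf : DifferentiableOn ℂ f (unitBall N)) :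
    DifferentiableOn ℂ (fun a : ℂ => f (a • EuclideanSpace.single p 1)) (ball 0 1) := by
  refine hf.comp (ContinuousLinearMap.toSpanSingleton ℂ _).differentiable.differentiableOn ?_
  intro a ha
  simpa [mem_unitBall_iff, norm_smul_single_one] using ha

lemma smul_single_zero_apply (z : EN 1) : z 0 • EuclideanSpace.single 0 (1 : ℂ) = z := by
  ext i
  fin_cases i
  simp

lemma radDn_eq_iterate_diskRadD {f : EN 1 → ℂ} (hf : DifferentiableOn ℂ f (unitBall 1))
    (k : ℕ) {z : EN 1} (hz : z ∈ unitBall 1) :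
    radDn k f z = diskRadD^[k] (fun a : ℂ => f (a • EuclideanSpace.single 0 1)) (z 0) := by
  set g : ℂ → ℂ := fun a => f (a • EuclideanSpace.single 0 1)
  induction k generalizing z with
  | zero => exact congrArg f (smul_single_zero_apply z).symm
  | succ k ih =>
    have hz0 : z 0 ∈ ball (0 : ℂ) 1 :=
      mem_ball_zero_iff.2 ((PiLp.norm_apply_le z 0).trans_lt (mem_unitBall_iff.1 hz))
    have hgk : DifferentiableAt ℂ (diskRadD^[k] g) (z 0) :=
      ((differentiableOn_slice 0 hf).iterate_diskRadD isOpen_ball k).differentiableAt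
        (isOpen_ball.mem_nhds hz0)
    have hloc : radDn k f =ᶠ[nhds z] fun w : EN 1 => diskRadD^[k] g (w 0) := by
      filter_upwards [isOpen_ball.mem_nhds hz] with w hw using ih hw
    have hcomp : HasFDerivAt (fun w : EN 1 => diskRadD^[k] g (w 0))
        (deriv (diskRadD^[k] g) (z 0) • (EuclideanSpace.proj 0 : EN 1 →L[ℂ] ℂ)) z :=
      hgk.hasDerivAt.comp_hasFDerivAt z (EuclideanSpace.proj 0 : EN 1 →L[ℂ] ℂ).hasFDerivAt
    rw [radDn, Function.iterate_succ_apply', ← radDn, radD, hloc.fderiv_eq, hcomp.fderiv,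
      Function.iterate_succ_apply', diskRadD]
    simp [mul_comm]

lemma exists_norm_apply_le_of_growthNorm_le_one {ν : ℝ → ℝ} (hcont : ContinuousOn ν (Ico 0 1))
    (hpos : ∀ t ∈ Ico (0 : ℝ) 1, 0 < ν t) (n : ℕ) {ρ : ℝ} (hρ : ρ < 1) :
    ∃ K > 0, ∀ f : EN 1 → ℂ, MemHw ν n f → growthNorm ν n f ≤ 1 →
      ∀ z : EN 1, ‖z‖ ≤ ρ → ‖f z‖ ≤ K := by
  set r := max ρ (1 / 2)
  have hr0 : 0 < r := lt_max_of_lt_right (by norm_num)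
  have hr1 : r < 1 := max_lt hρ (by norm_num)
  have hIcc : Icc 0 r ⊆ Ico (0 : ℝ) 1 := Icc_subset_Ico_right hr1
  obtain ⟨t₀, ht₀, hmin⟩ :=
    isCompact_Icc.exists_isMinOn (nonempty_Icc.2 hr0.le) (hcont.mono hIcc)
  have hm : 0 < ν t₀ := hpos t₀ (hIcc ht₀)
  refine ⟨1 + 1 / ν t₀, by positivity, fun f hf hfn z hz => ?_⟩
  set g : ℂ → ℂ := fun a => f (a • EuclideanSpace.single 0 1)
  have hR : ∀ a ∈ closedBall (0 : ℂ) r, ‖diskRadD^[n] g a‖ ≤ 1 / ν t₀ := by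
    intro a ha
    rw [mem_closedBall_zero_iff] at ha
    have hwa : a • EuclideanSpace.single 0 (1 : ℂ) ∈ unitBall 1 := by
      rw [mem_unitBall_iff, norm_smul_single_one]
      exact ha.trans_lt hr1
    have hgrowth := (le_growthNorm hf hwa).trans hfn
    rw [radDn_eq_iterate_diskRadD hf.1 n hwa, norm_smul_single_one] at hgrowth
    have hνa : ν t₀ ≤ ν ‖a‖ := hmin ⟨norm_nonneg a, ha⟩
    rw [le_div_iff₀ hm]
    simp only [PiLp.smul_apply, PiLp.single_eq_same, smul_eq_mul, mul_one] at hgrowth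
    nlinarith [norm_nonneg (diskRadD^[n] g a)]
  have hz0 : z 0 ∈ closedBall (0 : ℂ) r :=
    mem_closedBall_zero_iff.2 ((PiLp.norm_apply_le z 0).trans (hz.trans (le_max_left _ _)))
  have hg0 : ‖g 0‖ ≤ 1 := by
    simpa [g] using (norm_apply_zero_le_growthNorm (fun t ht => (hpos t ht).le) hf).trans hfn
  calc ‖f z‖ = ‖g (z 0)‖ := congrArg (‖f ·‖) (smul_single_zero_apply z).symm
    _ ≤ ‖g 0‖ + 1 / ν t₀ :=
        norm_le_of_norm_iterate_diskRadD_le hr0 hr1 n (differentiableOn_slice 0 hf.1) hR hz0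
    _ ≤ 1 + 1 / ν t₀ := by gcongr

lemma norm_sq_smul_sub_smul_eq {E : Type*} [NormedAddCommGroup E] [InnerProductSpace ℂ E]
    (α z : E) {s : ℝ} (hs : 0 ≤ s) (hs2 : s ^ 2 = 1 - ‖α‖ ^ 2) :
    ‖(1 - ⟪α, z⟫_ℂ / (1 + s)) • α - (s : ℂ) • z‖ ^ 2 =
      ‖1 - ⟪α, z⟫_ℂ‖ ^ 2 - (1 - ‖α‖ ^ 2) * (1 - ‖z‖ ^ 2) := by
  rw [norm_sub_sq (𝕜 := ℂ), norm_smul, norm_smul, inner_smul_left, inner_smul_right, mul_pow,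
    mul_pow, Complex.norm_real, Real.norm_of_nonneg hs, Complex.sq_norm, Complex.sq_norm]
  obtain ⟨x, y⟩ := ⟪α, z⟫_ℂ
  have hα : ‖α‖ ^ 2 = 1 - s ^ 2 := by linarith
  have h1s : (1 + s) ≠ 0 := by positivity
  rw [hα]
  simp only [Complex.normSq_apply, Complex.sub_re, Complex.sub_im, Complex.one_re, Complex.one_im,
    Complex.add_re, Complex.add_im, Complex.div_re, Complex.div_im, Complex.ofReal_re,
    Complex.ofReal_im, map_sub, map_one, map_div₀, map_add, Complex.conj_ofReal, RCLike.mul_re,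
    RCLike.re_to_complex, RCLike.im_to_complex, Complex.conj_re, Complex.conj_im, Complex.mul_im]
  field_simp
  ring

lemma ipd_eq_inner {N : ℕ} (z w : EN N) : ipd z w = ⟪w, z⟫_ℂ := by
  simp [ipd, PiLp.inner_apply]

lemma mobius_eq {N : ℕ} {α : EN N} (hα0 : α ≠ 0) (hα : ‖α‖ ≤ 1) (z : EN N) :
    mobius α z = (1 - ⟪α, z⟫_ℂ)⁻¹ •
      ((1 - ⟪α, z⟫_ℂ / (1 + √(1 - ‖α‖ ^ 2))) • α - (√(1 - ‖α‖ ^ 2) : ℂ) • z) := by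
  set s := √(1 - ‖α‖ ^ 2) with hs_def
  have hs2 : s ^ 2 = 1 - ‖α‖ ^ 2 := Real.sq_sqrt (by nlinarith [norm_nonneg α])
  have hs : (1 + s : ℂ) ≠ 0 := by exact_mod_cast (by positivity : (1 + s) ≠ 0)
  have hαn : (‖α‖ : ℂ) ≠ 0 := by exact_mod_cast norm_ne_zero_iff.2 hα0
  have hαs : (‖α‖ : ℂ) ^ 2 = (1 - s) * (1 + s) := by
    have : ‖α‖ ^ 2 = (1 - s) * (1 + s) := by linear_combination hs2
    exact_mod_cast this
  rw [mobius, ipd_eq_inner, ← hs_def]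
  congr 1
  match_scalars
  · field_simp
    linear_combination ⟪α, z⟫_ℂ * hαs
  · ring

lemma mobius_mem_unitBall {N : ℕ} {α z : EN N} (hα : α ∈ unitBall N) (hz : z ∈ unitBall N) :
    mobius α z ∈ unitBall N := by
  rw [mem_unitBall_iff] at *
  rcases eq_or_ne α 0 with rfl | hα0
  · simpa [mobius, ipd] using hz
  have hA : ‖⟪α, z⟫_ℂ‖ < 1 :=
    (norm_inner_le_norm α z).trans_lt (by nlinarith [norm_nonneg α, norm_nonneg z])
  have h1A : 0 < ‖1 - ⟪α, z⟫_ℂ‖ :=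
    norm_pos_iff.2 (sub_ne_zero.2 fun h => by simp [← h] at hA)
  have hsq := norm_sq_smul_sub_smul_eq α z (Real.sqrt_nonneg _)
    (Real.sq_sqrt (by nlinarith [norm_nonneg α]))
  have hprod : 0 < (1 - ‖α‖ ^ 2) * (1 - ‖z‖ ^ 2) :=
    mul_pos (by nlinarith [norm_nonneg α]) (by nlinarith [norm_nonneg z])
  rw [mobius_eq hα0 hα.le z, norm_smul, norm_inv, inv_mul_lt_iff₀ h1A, mul_one]
  exact lt_of_pow_lt_pow_left₀ 2 h1A.le (by linarith)

lemma exists_apply_eq_and_norm_eq {N : ℕ} {p q : Fin N} (hqp : q ≠ p) {a : ℂ} {R : ℝ}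
    (ha : ‖a‖ ≤ R) : ∃ w : EN N, w p = a ∧ ‖w‖ = R := by
  set t := √(R ^ 2 - ‖a‖ ^ 2)
  have ht : t ^ 2 = R ^ 2 - ‖a‖ ^ 2 :=
    Real.sq_sqrt (by nlinarith [norm_nonneg a])
  refine ⟨EuclideanSpace.single p a + EuclideanSpace.single q (t : ℂ), by simp [hqp], ?_⟩
  have horth : ⟪EuclideanSpace.single p a, EuclideanSpace.single q (t : ℂ)⟫_ℂ = 0 := by
    simp [EuclideanSpace.inner_single_left, hqp]
  rw [← sq_eq_sq₀ (norm_nonneg _) ((norm_nonneg a).trans ha), norm_add_sq (𝕜 := ℂ), horth]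
  simp [ht]

section CoordinateEvaluation

variable {N : ℕ} {ν : ℝ → ℝ} {j : ℕ} {h : EN N → ℝ} {p : Fin N}

/-- `w ↦ h(w) ‖δ_{w_p}‖`, whose supremum over `B` is `M_p^{j*}`. -/
def coordEvalWeight (ν : ℝ → ℝ) (j : ℕ) (h : EN N → ℝ) (p : Fin N) (w : EN N) : ℝ :=
  h w * evalNorm ν j (w p • EuclideanSpace.single p 1)

lemma evalNorm_le_div_of_lt_norm {c r : ℝ} (hc : 0 < c)
    (hh : ∀ w ∈ unitBall N, r < ‖w‖ → c ≤ h w)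
    (hM : BddAbove (coordEvalWeight ν j h p '' unitBall N)) {w : EN N} (hw : w ∈ unitBall N)
    (hrw : r < ‖w‖) :
    evalNorm ν j (w p • EuclideanSpace.single p 1) ≤
      sSup (coordEvalWeight ν j h p '' unitBall N) / c := by
  rw [le_div_iff₀ hc, mul_comm]
  exact (mul_le_mul_of_nonneg_right (hh w hw hrw) (evalNorm_nonneg _)).trans
    (le_csSup hM ⟨w, hw, rfl⟩)

lemma exists_evalNorm_smul_single_le_of_norm_le (hcont : ContinuousOn ν (Ico 0 1))
    (hpos : ∀ t ∈ Ico (0 : ℝ) 1, 0 < ν t) (hj : 1 ≤ j) {c r : ℝ} (hc : 0 < c) (hr : r < 1)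
    (hh : ∀ w ∈ unitBall N, r < ‖w‖ → c ≤ h w)
    (hM : BddAbove (coordEvalWeight ν j h p '' unitBall N)) {ρ : ℝ} (hρ : ρ < 1) :
    ∃ K > 0, ∀ a : ℂ, ‖a‖ ≤ ρ → evalNorm ν j (a • EuclideanSpace.single p 1) ≤
      K * sSup (coordEvalWeight ν j h p '' unitBall N) := by
  obtain ⟨R, hR, hR1⟩ := exists_between (max_lt (max_lt hr hρ) one_pos)
  have hrR : r < R := (le_max_left _ _).trans_lt ((le_max_left _ _).trans_lt hR)
  have hρR : ρ < R := (le_max_right _ _).trans_lt ((le_max_left _ _).trans_lt hR)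
  have hR0 : 0 ≤ R := (le_max_right _ _).trans hR.le
  by_cases hN : ∃ q, q ≠ p
  · obtain ⟨q, hqp⟩ := hN
    refine ⟨1 / c, by positivity, fun a ha => ?_⟩
    obtain ⟨w, hwp, hwR⟩ := exists_apply_eq_and_norm_eq hqp (ha.trans hρR.le)
    have hw : w ∈ unitBall N := mem_unitBall_iff.2 (hwR ▸ hR1)
    simpa only [hwp, one_div_mul_eq_div] using evalNorm_le_div_of_lt_norm hc hh hM hw (hwR ▸ hrR)
  · simp only [ne_eq, not_exists, not_not] at hN
    have : Subsingleton (Fin N) := ⟨fun q q' => (hN q).trans (hN q').symm⟩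
    obtain rfl : N = 1 := le_antisymm (Fin.subsingleton_iff_le_one.1 this) p.pos
    obtain rfl : p = 0 := Subsingleton.elim p 0
    obtain ⟨K, hK, hbound⟩ := exists_norm_apply_le_of_growthNorm_le_one hcont hpos j hR1
    set w₀ : EN 1 := (R : ℂ) • EuclideanSpace.single 0 1
    have hw₀ : ‖w₀‖ = R := by
      rw [norm_smul_single_one, Complex.norm_real, Real.norm_of_nonneg hR0]
    have hE : 1 ≤ evalNorm ν j (w₀ 0 • EuclideanSpace.single 0 1) :=
      one_le_evalNorm hj fun f hf hfn => hbound f hf hfn _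
        ((norm_smul_single_one 0 _).trans_le ((PiLp.norm_apply_le w₀ 0).trans hw₀.le))
    have hcM : c ≤ sSup (coordEvalWeight ν j h 0 '' unitBall 1) := by
      simpa using (le_div_iff₀ hc).1 (hE.trans (evalNorm_le_div_of_lt_norm hc hh hM
        (mem_unitBall_iff.2 (hw₀ ▸ hR1)) (hw₀ ▸ hrR)))
    refine ⟨K / c, by positivity, fun a ha => ?_⟩
    calc evalNorm ν j (a • EuclideanSpace.single 0 1) ≤ K :=
          evalNorm_le hK.le fun f hf hfn => hbound f hf hfn _
            ((norm_smul_single_one 0 a).trans_le (ha.trans hρR.le))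
      _ = K / c * c := (div_mul_cancel₀ K hc.ne').symm
      _ ≤ _ := by gcongr

lemma exists_evalNorm_smul_single_le (hcont : ContinuousOn ν (Ico 0 1))
    (hpos : ∀ t ∈ Ico (0 : ℝ) 1, 0 < ν t) (hj : 1 ≤ j) {c r : ℝ} (hc : 0 < c) (hr : r < 1)
    (hh : ∀ w ∈ unitBall N, r < ‖w‖ → c ≤ h w)
    (hM : BddAbove (coordEvalWeight ν j h p '' unitBall N)) :
    ∃ C > 0, ∀ a : ℂ, ‖a‖ < 1 → evalNorm ν j (a • EuclideanSpace.single p 1) ≤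
      C * sSup (coordEvalWeight ν j h p '' unitBall N) := by
  obtain ⟨K, hK, hnear⟩ :=
    exists_evalNorm_smul_single_le_of_norm_le hcont hpos hj hc hr hh hM (max_lt hr one_pos)
  have hM0 : 0 ≤ sSup (coordEvalWeight ν j h p '' unitBall N) :=
    nonneg_of_mul_nonneg_right ((evalNorm_nonneg _).trans
      (hnear 0 (norm_zero.trans_le (le_max_right r 0)))) hK
  refine ⟨max (1 / c) K, by positivity, fun a ha => ?_⟩
  rcases le_or_gt ‖a‖ (max r 0) with har | har
  · exact (hnear a har).trans (by gcongr; exact le_max_right _ _)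
  · have hw : a • EuclideanSpace.single p 1 ∈ unitBall N := by
      rwa [mem_unitBall_iff, norm_smul_single_one]
    calc evalNorm ν j (a • EuclideanSpace.single p 1)
        ≤ sSup (coordEvalWeight ν j h p '' unitBall N) / c := by
          simpa using evalNorm_le_div_of_lt_norm hc hh hM hw
            (by rw [norm_smul_single_one]; exact (le_max_left r 0).trans_lt har)
      _ ≤ max (1 / c) K * sSup (coordEvalWeight ν j h p '' unitBall N) := by
          rw [div_eq_inv_mul, ← one_div]
          gcongr
          exact le_max_left _ _

end CoordinateEvaluation

end

theorem stmt_5_general {N : ℕ} (p : Fin N) (ν : ℝ → ℝ) (hν : IsNormalWeight ν)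
    (h : EN N → ℝ)
    (hbdd : ∃ M : ℝ, ∀ z ∈ unitBall N, h z ≤ M)
    (hliminf : ∃ c > (0:ℝ), ∃ r < (1:ℝ), ∀ z ∈ unitBall N, r < ‖z‖ → c ≤ h z)
    (α : EN N) (hα : α ∈ unitBall N)
    (j : ℕ) (hj : 1 ≤ j)
    (hM : BddAbove
      ((fun w => h w * evalNorm ν j ((w p) • EuclideanSpace.single p (1:ℂ))) ''
        unitBall N)) :
    ∃ C > (0:ℝ), ∀ z ∈ unitBall N,
      h z * evalNorm ν j ((mobius α z p) • EuclideanSpace.single p (1:ℂ)) ≤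
        C * sSup ((fun w => h w * evalNorm ν j ((w p) • EuclideanSpace.single p (1:ℂ))) ''
          unitBall N) := by
  obtain ⟨M, hhM⟩ := hbdd
  obtain ⟨c, hc, r, hr, hhc⟩ := hliminf
  obtain ⟨C, hC, hCa⟩ := exists_evalNorm_smul_single_le hν.cont hν.pos hj hc hr hhc hM
  refine ⟨max M 1 * C, by positivity, fun z hz => ?_⟩
  have hγ : ‖mobius α z p‖ < 1 :=
    (PiLp.norm_apply_le _ p).trans_lt (mem_unitBall_iff.1 (mobius_mem_unitBall hα hz))
  have hE := evalNorm_nonneg (ν := ν) (n := j) (mobius α z p • EuclideanSpace.single p 1)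
  calc h z * evalNorm ν j (mobius α z p • EuclideanSpace.single p 1)
      ≤ max M 1 * evalNorm ν j (mobius α z p • EuclideanSpace.single p 1) := by
        gcongr
        exact (hhM z hz).trans (le_max_left _ _)
    _ ≤ max M 1 * (C * sSup (coordEvalWeight ν j h p '' unitBall N)) := by
        gcongr
        exact hCa _ hγ
    _ = _ := (mul_assoc _ _ _).symm

/-- Lemma for the Möbius automorphism: if
`M_p^{j*} = sup_w h(w)‖δ_{w_p}^{H_ν^{(j)}}‖ < ∞`, then
`sup_z h(z)‖δ_{γ_p(z)}^{H_ν^{(j)}}‖ ≤ C_{p,j} M_p^{j*}`. -/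
theorem stmt_5 {N : ℕ} (p : Fin N) (ν : ℝ → ℝ) (hν : IsNormalWeight ν)
    (h : EN N → ℝ)
    (hpos : ∀ z ∈ unitBall N, 0 < h z)
    (hbdd : ∃ M : ℝ, ∀ z ∈ unitBall N, h z ≤ M)
    (hliminf : ∃ c > (0:ℝ), ∃ r < (1:ℝ), ∀ z ∈ unitBall N, r < ‖z‖ → c ≤ h z)
    (α : EN N) (hα : α ∈ unitBall N) (hα0 : α ≠ 0)
    (j : ℕ) (hj : 1 ≤ j)
    (hM : BddAbove
      ((fun w => h w * evalNorm ν j ((w p) • EuclideanSpace.single p (1:ℂ))) ''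
        unitBall N)) :
    ∃ C > (0:ℝ), ∀ z ∈ unitBall N,
      h z * evalNorm ν j ((mobius α z p) • EuclideanSpace.single p (1:ℂ)) ≤
        C * sSup ((fun w => h w * evalNorm ν j ((w p) • EuclideanSpace.single p (1:ℂ))) ''
          unitBall N) :=
  stmt_5_general p ν hν h hbdd hliminf α hα j hj hM
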